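/- For every positive integer n and every integer t: if n is odd then the sum over k from 0 to n of (-1)^{n-k} * (n/(n+k)) * C(n+k, n-k) * L_{3k+t} equals (5/2)·F_t·F_n, and if n is even the same sum equals (1/2)·L_t·L_n. -/

import Mathlib

/-!
By Binet, `L_m = φ ^ m + ψ ^ m`, and `x ^ 3 = x + x⁻¹ + 2` for `x ∈ {φ, ψ}`, so the sum equals
`φ ^ t P_n(φ + φ⁻¹ + 2) + ψ ^ t P_n(ψ + ψ⁻¹ + 2)` with `P_n(z) = ∑ₖ (-1)^(n-k) n/(n+k) C(n+k, n-k) zᵏ`.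
The Chebyshev-type identity `P_n(u + u⁻¹ + 2) = (uⁿ + u⁻ⁿ) / 2` turns this into
`(L_{t+n} + L_{t-n}) / 2`, and `L_{t+n} + L_{t-n}` is `L_t L_n` for even `n` and `5 F_t F_n` for odd `n`.

The identity holds because `2 P_n = W_n - W_{n-1}` for `W_n(z) = ∑ₖ (-1)^(n+k) C(n+k, 2k) zᵏ`, and
Pascal's rule gives `W_{n+2} = (z - 2) W_{n+1} - W_n`, the recurrence of `uⁿ + u⁻ⁿ` when
`z = u + u⁻¹ + 2`.
-/

open Finset

/-- Fibonacci numbers extended to all integers: `F_{-n} = (-1)^{n-1} F_n`. -/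
def fibZ (n : ℤ) : ℤ :=
  if 0 ≤ n then Nat.fib n.toNat else (-1) ^ (n.natAbs + 1) * Nat.fib n.natAbs

/-- Lucas numbers extended to all integers: `L_n = F_{n-1} + F_{n+1}`. -/
def lucasZ (n : ℤ) : ℤ := fibZ (n - 1) + fibZ (n + 1)

theorem Nat.choose_add_two_add_two (m j : ℕ) :
    (m + 2).choose (j + 2) = m.choose j + 2 * m.choose (j + 1) + m.choose (j + 2) := by
  rw [Nat.choose_succ_succ', Nat.choose_succ_succ', Nat.choose_succ_succ']
  ring

def chebWCoeff (n k : ℕ) : ℤ := (-1) ^ (n + k) * (n + k).choose (2 * k)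

theorem chebWCoeff_zero_right (n : ℕ) : chebWCoeff n 0 = (-1) ^ n := by
  simp [chebWCoeff]

theorem chebWCoeff_eq_zero_of_lt {n k : ℕ} (h : n < k) : chebWCoeff n k = 0 := by
  simp [chebWCoeff, Nat.choose_eq_zero_of_lt (by omega : n + k < 2 * k)]

theorem chebWCoeff_add_two_succ (n k : ℕ) :
    chebWCoeff (n + 2) (k + 1) =
      chebWCoeff (n + 1) k - 2 * chebWCoeff (n + 1) (k + 1) - chebWCoeff n (k + 1) := by
  have h := Nat.choose_add_two_add_two (n + k + 1) (2 * k)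
  have h' := Nat.choose_succ_succ' (n + k + 1) (2 * k + 1)
  simp only [chebWCoeff, show n + 2 + (k + 1) = n + k + 1 + 2 by ring,
    show n + 1 + (k + 1) = n + k + 1 + 1 by ring, show n + 1 + k = n + k + 1 by ring,
    show n + (k + 1) = n + k + 1 by ring, show 2 * (k + 1) = 2 * k + 2 by ring, h, h', pow_succ]
  push_cast
  ring

section CommRing

variable {R : Type*} [CommRing R]

/-- `chebW n (2 + 2 * x)` is the Chebyshev polynomial `W_n(x)` of the fourth kind. -/
def chebW (n : ℕ) (z : R) : R := ∑ k ∈ range (n + 1), (chebWCoeff n k : R) * z ^ k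

theorem chebW_eq_sum_range {n N : ℕ} (h : n < N) (z : R) :
    chebW n z = ∑ k ∈ range N, (chebWCoeff n k : R) * z ^ k :=
  sum_subset (range_subset_range.2 h) fun k _ hk => by
    rw [chebWCoeff_eq_zero_of_lt (by simpa using hk), Int.cast_zero, zero_mul]

theorem chebW_add_two (n : ℕ) (z : R) :
    chebW (n + 2) z = (z - 2) * chebW (n + 1) z - chebW n z := by
  have hz : z * chebW (n + 1) z =
      ∑ k ∈ range (n + 2), (chebWCoeff (n + 1) k : R) * z ^ (k + 1) := by
    simp only [chebW, mul_sum, pow_succ]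
    exact sum_congr rfl fun k _ => by ring
  rw [sub_mul, hz, chebW_eq_sum_range (show n < n + 3 by omega),
    chebW_eq_sum_range (show n + 1 < n + 3 by omega), chebW,
    sum_range_succ' (fun k => (chebWCoeff (n + 2) k : R) * z ^ k) (n + 2),
    sum_range_succ' (fun k => (chebWCoeff (n + 1) k : R) * z ^ k) (n + 2),
    sum_range_succ' (fun k => (chebWCoeff n k : R) * z ^ k) (n + 2)]
  simp only [chebWCoeff_add_two_succ, chebWCoeff_zero_right, Int.cast_sub, Int.cast_mul, sub_mul,
    sum_sub_distrib, mul_assoc, ← mul_sum]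
  push_cast
  ring

theorem chebW_succ_sub_chebW {u v : R} (huv : u * v = 1) :
    ∀ n : ℕ, chebW (n + 1) (u + v + 2) - chebW n (u + v + 2) = u ^ (n + 1) + v ^ (n + 1)
  | 0 => by simp [chebW, chebWCoeff, sum_range_succ]; ring
  | 1 => by
    simp [chebW, chebWCoeff, sum_range_succ, Nat.choose]
    linear_combination (2 : R) * huv
  | n + 2 => by
    have h₀ := chebW_succ_sub_chebW huv n
    have h₁ := chebW_succ_sub_chebW huv (n + 1)
    have r₀ := chebW_add_two n (u + v + 2)
    have r₁ := chebW_add_two (n + 1) (u + v + 2)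
    linear_combination r₁ - r₀ + (u + v) * h₁ - h₀ + (u ^ (n + 1) + v ^ (n + 1)) * huv

end CommRing

section Field

variable {K : Type*} [Field K] [CharZero K]

theorem two_mul_weight_eq_chebWCoeff_sub {n k : ℕ} (hk : k ≤ n + 1) :
    2 * ((-1 : K) ^ (n + 1 - k) * (((n + 1 : ℕ) : K) / ((n + 1 : ℕ) + k)) *
        ((n + 1 + k).choose (n + 1 - k) : K)) = chebWCoeff (n + 1) k - chebWCoeff n k := by
  have hsymm : (n + k + 1).choose (n + 1 - k) = (n + k + 1).choose (2 * k) :=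
    Nat.choose_symm_of_eq_add (by omega)
  have hsign : (-1 : K) ^ (n + 1 - k) = (-1) ^ (n + k + 1) := by
    rw [show n + k + 1 = n + 1 - k + 2 * k by omega, pow_add, pow_mul, neg_one_sq, one_pow,
      mul_one]
  have hmul : ((n + k).choose (2 * k) : K) * (n + k + 1) =
      (n + k + 1).choose (2 * k) * (n + 1 - k) := by
    have := Nat.choose_mul_succ_eq (n + k) (2 * k)
    rw [show n + k + 1 - 2 * k = n + 1 - k by omega] at this
    exact_mod_cast this
  have hpos : ((n + 1 + k : ℕ) : K) ≠ 0 := Nat.cast_ne_zero.2 (by omega)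
  simp only [chebWCoeff, hsign, show n + 1 + k = n + k + 1 by ring, hsymm]
  push_cast at hpos ⊢
  field_simp
  linear_combination (-1 : K) ^ (n + k) * hmul

theorem sum_weight_mul_pow_eq {u v : K} (huv : u * v = 1) {n : ℕ} (hn : 0 < n) :
    ∑ k ∈ range (n + 1), (-1 : K) ^ (n - k) * ((n : K) / (n + k)) *
      ((n + k).choose (n - k) : K) * (u + v + 2) ^ k = (u ^ n + v ^ n) / 2 := by
  obtain ⟨m, rfl⟩ := Nat.exists_eq_add_one_of_ne_zero hn.ne'
  have h := chebW_succ_sub_chebW huv m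
  rw [chebW_eq_sum_range (show m < m + 2 by omega), chebW, ← sum_sub_distrib] at h
  rw [eq_div_iff two_ne_zero, mul_comm, mul_sum, ← h]
  refine sum_congr rfl fun k hk => ?_
  rw [← mul_assoc, two_mul_weight_eq_chebWCoeff_sub (by simpa [Nat.lt_succ_iff] using hk), sub_mul]

end Field

theorem pow_three_eq_add_inv_add_two {K : Type*} [Field K] {x : K} (hx : x ^ 2 = x + 1) :
    x ^ 3 = x + x⁻¹ + 2 := by
  have hx0 : x ≠ 0 := by rintro rfl; norm_num at hx
  field_simp
  linear_combination (x ^ 2 + x + 1) * hx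

open Real goldenRatio

theorem fibZ_eq_intFib : fibZ = Int.fib := by
  funext n
  obtain ⟨m, rfl | rfl⟩ := n.eq_nat_or_neg
  · simp [fibZ]
  · rcases m.eq_zero_or_pos with rfl | hm
    · simp [fibZ]
    · rw [Int.fib_neg_natCast, fibZ, if_neg (by omega), Int.natAbs_neg, Int.natAbs_natCast]

theorem fibZ_eq_binet (n : ℤ) : (fibZ n : ℝ) = (φ ^ n - ψ ^ n) / √5 := by
  rw [fibZ_eq_intFib, coe_intFib_eq]

theorem lucasZ_eq_binet (n : ℤ) : (lucasZ n : ℝ) = φ ^ n + ψ ^ n := by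
  have hφ := goldenRatio_ne_zero
  have hψ := goldenConj_ne_zero
  rw [lucasZ, Int.cast_add, fibZ_eq_binet, fibZ_eq_binet, zpow_sub_one₀ hφ, zpow_sub_one₀ hψ,
    zpow_add_one₀ hφ, zpow_add_one₀ hψ, inv_goldenRatio, inv_goldenConj,
    ← goldenRatio_sub_goldenConj]
  field_simp
  ring

theorem lucasZ_add_add_lucasZ_sub (t : ℤ) (n : ℕ) :
    (lucasZ (t + n) + lucasZ (t - n) : ℝ) =
      φ ^ t * (φ ^ n + φ⁻¹ ^ n) + ψ ^ t * (ψ ^ n + ψ⁻¹ ^ n) := by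
  rw [lucasZ_eq_binet, lucasZ_eq_binet, zpow_add₀ goldenRatio_ne_zero,
    zpow_add₀ goldenConj_ne_zero, zpow_sub₀ goldenRatio_ne_zero, zpow_sub₀ goldenConj_ne_zero]
  simp only [zpow_natCast, div_eq_mul_inv, inv_pow]
  ring

theorem lucasZ_add_add_lucasZ_sub_of_even {n : ℕ} (hn : Even n) (t : ℤ) :
    lucasZ (t + n) + lucasZ (t - n) = lucasZ t * lucasZ n := by
  have h := lucasZ_add_add_lucasZ_sub t n
  rw [inv_goldenRatio, inv_goldenConj, hn.neg_pow, hn.neg_pow] at h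
  have : (lucasZ t * lucasZ n : ℝ) = φ ^ t * (φ ^ n + ψ ^ n) + ψ ^ t * (ψ ^ n + φ ^ n) := by
    simp only [lucasZ_eq_binet, zpow_natCast]
    ring
  exact_mod_cast h.trans this.symm

theorem lucasZ_add_add_lucasZ_sub_of_odd {n : ℕ} (hn : Odd n) (t : ℤ) :
    lucasZ (t + n) + lucasZ (t - n) = 5 * fibZ t * fibZ n := by
  have h := lucasZ_add_add_lucasZ_sub t n
  rw [inv_goldenRatio, inv_goldenConj, hn.neg_pow, hn.neg_pow] at h
  have : (5 * fibZ t * fibZ n : ℝ) = φ ^ t * (φ ^ n - ψ ^ n) + ψ ^ t * (ψ ^ n - φ ^ n) := by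
    simp only [fibZ_eq_binet, zpow_natCast]
    field_simp
    rw [sq_sqrt (by norm_num)]
    ring
  exact_mod_cast h.trans (this.trans (by ring)).symm

theorem lucasZ_three_mul_add (k : ℕ) (t : ℤ) :
    (lucasZ (3 * k + t) : ℝ) = φ ^ t * (φ + φ⁻¹ + 2) ^ k + ψ ^ t * (ψ + ψ⁻¹ + 2) ^ k := by
  rw [lucasZ_eq_binet, ← pow_three_eq_add_inv_add_two goldenRatio_sq,
    ← pow_three_eq_add_inv_add_two goldenConj_sq, zpow_add₀ goldenRatio_ne_zero,
    zpow_add₀ goldenConj_ne_zero, zpow_mul, zpow_mul]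
  norm_cast
  ring

theorem sum_weight_mul_lucasZ_three_mul_add {n : ℕ} (hn : 0 < n) (t : ℤ) :
    ∑ k ∈ range (n + 1), (-1 : ℚ) ^ (n - k) * ((n : ℚ) / (n + k)) *
      (Nat.choose (n + k) (n - k)) * (lucasZ (3 * k + t) : ℚ) =
    ((lucasZ (t + n) + lucasZ (t - n) : ℤ) : ℚ) / 2 := by
  apply Rat.cast_injective (α := ℝ)
  push_cast
  simp only [lucasZ_three_mul_add, mul_add, sum_add_distrib, mul_left_comm _ (φ ^ t),
    mul_left_comm _ (ψ ^ t), ← mul_sum, lucasZ_add_add_lucasZ_sub,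
    sum_weight_mul_pow_eq (mul_inv_cancel₀ goldenRatio_ne_zero) hn,
    sum_weight_mul_pow_eq (mul_inv_cancel₀ goldenConj_ne_zero) hn]
  ring

theorem stmt_14 (n : ℕ) (hn : 0 < n) (t : ℤ) :
    (Odd n →
      ∑ k ∈ range (n + 1), (-1 : ℚ) ^ (n - k) * ((n : ℚ) / (n + k)) *
        (Nat.choose (n + k) (n - k)) * (lucasZ (3 * k + t) : ℚ) =
      5 / 2 * (fibZ t : ℚ) * (fibZ n : ℚ)) ∧
    (Even n →
      ∑ k ∈ range (n + 1), (-1 : ℚ) ^ (n - k) * ((n : ℚ) / (n + k)) *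
        (Nat.choose (n + k) (n - k)) * (lucasZ (3 * k + t) : ℚ) =
      1 / 2 * (lucasZ t : ℚ) * (lucasZ n : ℚ)) := by
  rw [sum_weight_mul_lucasZ_three_mul_add hn t]
  refine ⟨fun hodd => ?_, fun heven => ?_⟩
  · rw [lucasZ_add_add_lucasZ_sub_of_odd hodd]
    push_cast
    ring
  · rw [lucasZ_add_add_lucasZ_sub_of_even heven]
    push_cast
    ring
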